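/- arXiv:2004.11729 — 4 statements merged into one kernel-verified Lean document; each statement's English description precedes it below -/
import Mathlib

section
/- If {x_i}_{i≥1} is a frame for a separable complex Hilbert space H with frame bounds A, B > 0, frame operator S = T*T where T is the analysis operator, then the iteration x⁽ⁿ⁾ = x⁽ⁿ⁻¹⁾ + (2/(A+B)) S(x − x⁽ⁿ⁻¹⁾) with x⁽⁰⁾ = 0 satisfies ‖x − x⁽ⁿ⁾‖ ≤ ((B−A)/(B+A))ⁿ ‖x‖ for every x ∈ H; in particular x⁽ⁿ⁾ → x. -/
open MeasureTheory Filter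
open scoped InnerProductSpace

lemma aux_contraction {H : Type*} [NormedAddCommGroup H] [InnerProductSpace ℂ H]
    (M : H →L[ℂ] H) (r : ℝ)
    (hsym : ∀ y z : H, ⟪M y, z⟫_ℂ = ⟪y, M z⟫_ℂ)
    (hq : ∀ z : H, |(⟪M z, z⟫_ℂ).re| ≤ r * ‖z‖ ^ 2)
    (y : H) : ‖M y‖ ≤ r * ‖y‖ := by
  rcases eq_or_ne (M y) 0 with h | h
  · have h1 := hq y
    rw [h, inner_zero_left] at h1
    simp only [Complex.zero_re, abs_zero] at h1
    rw [h, norm_zero]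
    rcases (norm_nonneg y).lt_or_eq with hpos | heq
    · have : 0 ≤ r := by nlinarith [pow_pos hpos 2]
      exact mul_nonneg this (norm_nonneg y)
    · rw [← heq, mul_zero]
  · have hy : y ≠ 0 := by rintro rfl; simp at h
    have hMy : 0 < ‖M y‖ := norm_pos_iff.mpr h
    have hy' : 0 < ‖y‖ := norm_pos_iff.mpr hy
    set z : H := ((‖y‖ / ‖M y‖ : ℝ) : ℂ) • M y with hzdef
    have hz : ‖z‖ = ‖y‖ := by
      rw [hzdef, norm_smul, Complex.norm_real, Real.norm_eq_abs,
        abs_of_pos (div_pos hy' hMy)]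
      field_simp
    have hre : (⟪M y, M y⟫_ℂ).re = ‖M y‖ ^ 2 := by
      simpa using @inner_self_eq_norm_sq ℂ H _ _ _ (M y)
    have him : (⟪M y, M y⟫_ℂ).im = 0 := by
      rw [← RCLike.im_to_complex]
      exact inner_self_im (M y)
    have hzy : (⟪M y, z⟫_ℂ).re = ‖y‖ * ‖M y‖ := by
      rw [hzdef, inner_smul_right, Complex.mul_re, Complex.ofReal_re,
        Complex.ofReal_im, hre, him]
      field_simp
      ring
    have hpol : (⟪M (y + z), y + z⟫_ℂ).re - (⟪M (y - z), y - z⟫_ℂ).re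
        = 4 * (⟪M y, z⟫_ℂ).re := by
      have h1 : ⟪M z, y⟫_ℂ = (starRingEnd ℂ) ⟪M y, z⟫_ℂ := by
        rw [hsym, inner_conj_symm]
      have h2 : ⟪M (y + z), y + z⟫_ℂ - ⟪M (y - z), y - z⟫_ℂ
          = 2 * ⟪M y, z⟫_ℂ + 2 * ⟪M z, y⟫_ℂ := by
        simp only [map_add, map_sub, inner_add_left, inner_add_right,
          inner_sub_left, inner_sub_right]
        ring
      have h3 := congrArg Complex.re h2
      simp only [Complex.sub_re, Complex.add_re, Complex.mul_re] at h3 ⊢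
      rw [h1] at h3
      simp only [Complex.conj_re, Complex.conj_im] at h3
      norm_num at h3 ⊢
      linarith
    have hpar := parallelogram_law_with_norm ℂ y z
    have hb1 := (abs_le.mp (hq (y + z))).2
    have hb2 := (abs_le.mp (hq (y - z))).1
    have hsum4 : ‖y + z‖ ^ 2 + ‖y - z‖ ^ 2 = 4 * ‖y‖ ^ 2 := by
      nlinarith [hpar, hz]
    have h4 : 4 * (‖y‖ * ‖M y‖) ≤ r * ‖y + z‖ ^ 2 + r * ‖y - z‖ ^ 2 := by
      linarith [hpol, hzy, hb1, hb2]
    have h5 : r * ‖y + z‖ ^ 2 + r * ‖y - z‖ ^ 2 = 4 * (r * ‖y‖ ^ 2) := by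
      rw [← mul_add, hsum4]; ring
    nlinarith [hy']

/-- **Frame algorithm.** If `v` is a frame for a separable complex Hilbert space `H` with
frame bounds `A, B > 0` and frame operator `S` (defined weakly by
`⟪S x, y⟫ = ∑ᵢ ⟪x, vᵢ⟫ ⟪vᵢ, y⟫`), then the iteration
`x⁽ⁿ⁺¹⁾ = x⁽ⁿ⁾ + (2/(A+B)) • S (x - x⁽ⁿ⁾)`, `x⁽⁰⁾ = 0`, satisfies
`‖x - x⁽ⁿ⁾‖ ≤ ((B-A)/(B+A))ⁿ ‖x‖`, and in particular `x⁽ⁿ⁾ → x`. -/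
theorem frame_algorithm
    {H : Type*} [NormedAddCommGroup H] [InnerProductSpace ℂ H] [CompleteSpace H]
    [TopologicalSpace.SeparableSpace H]
    (v : ℕ → H) (A B : ℝ) (hA : 0 < A) (hB : 0 < B)
    (hframe : ∀ x : H, A * ‖x‖ ^ 2 ≤ ∑' i, ‖⟪x, v i⟫_ℂ‖ ^ 2 ∧
      ∑' i, ‖⟪x, v i⟫_ℂ‖ ^ 2 ≤ B * ‖x‖ ^ 2)
    (S : H →L[ℂ] H)
    (hS : ∀ x y : H, ⟪S x, y⟫_ℂ = ∑' i, ⟪x, v i⟫_ℂ * ⟪v i, y⟫_ℂ)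
    (x : H) (seq : ℕ → H) (h0 : seq 0 = 0)
    (hrec : ∀ n, seq (n + 1) = seq n + ((2 / (A + B) : ℂ)) • S (x - seq n)) :
    (∀ n, ‖x - seq n‖ ≤ ((B - A) / (B + A)) ^ n * ‖x‖) ∧
      Tendsto seq atTop (nhds x) := by
  -- the frame operator applied diagonally
  have hSyy : ∀ y : H, ⟪S y, y⟫_ℂ = ((∑' i, ‖⟪y, v i⟫_ℂ‖ ^ 2 : ℝ) : ℂ) := by
    intro y
    rw [hS, Complex.ofReal_tsum]
    congr 1
    ext i
    rw [← inner_conj_symm (v i) y, RCLike.mul_conj]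
    norm_cast
  -- symmetry of S
  have hsymS : ∀ y z : H, ⟪S y, z⟫_ℂ = ⟪y, S z⟫_ℂ := by
    intro y z
    calc ⟪S y, z⟫_ℂ = ∑' i, ⟪y, v i⟫_ℂ * ⟪v i, z⟫_ℂ := hS y z
      _ = ∑' i, star (⟪z, v i⟫_ℂ * ⟪v i, y⟫_ℂ) := by
          congr 1
          ext i
          simp only [star_mul']
          rw [← starRingEnd_apply, ← starRingEnd_apply, inner_conj_symm,
            inner_conj_symm]
          ring
      _ = star (∑' i, ⟪z, v i⟫_ℂ * ⟪v i, y⟫_ℂ) := (tsum_star).symm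
      _ = star ⟪S z, y⟫_ℂ := by rw [hS]
      _ = ⟪y, S z⟫_ℂ := by rw [← starRingEnd_apply, inner_conj_symm]
  set r : ℝ := (B - A) / (B + A) with hrdef
  set c : ℝ := 2 / (A + B) with hcdef
  have hABpos : 0 < A + B := by linarith
  by_cases hAB : A ≤ B
  · -- main case
    have hr0 : 0 ≤ r := div_nonneg (by linarith) (by linarith)
    have hr1 : r < 1 := by
      rw [hrdef, div_lt_one (by linarith)]; linarith
    set M : H →L[ℂ] H := ContinuousLinearMap.id ℂ H - ((c : ℂ)) • S with hMdef
    have hMapp : ∀ y : H, M y = y - (c : ℂ) • S y := fun y => rfl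
    have hMsym : ∀ y z : H, ⟪M y, z⟫_ℂ = ⟪y, M z⟫_ℂ := by
      intro y z
      rw [hMapp, hMapp, inner_sub_left, inner_sub_right, inner_smul_left,
        inner_smul_right, hsymS, Complex.conj_ofReal]
    have hMq : ∀ z : H, |(⟪M z, z⟫_ℂ).re| ≤ r * ‖z‖ ^ 2 := by
      intro z
      have h1 : (⟪M z, z⟫_ℂ).re = ‖z‖ ^ 2 - c * ∑' i, ‖⟪z, v i⟫_ℂ‖ ^ 2 := by
        rw [hMapp, inner_sub_left, inner_smul_left, hSyy]
        simp [inner_self_eq_norm_sq_to_K]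
        norm_cast
      rw [h1]
      have hf1 := (hframe z).1
      have hf2 := (hframe z).2
      set s := ∑' i, ‖⟪z, v i⟫_ℂ‖ ^ 2 with hsdef
      have hne : B + A ≠ 0 := by positivity
      have hne' : A + B ≠ 0 := by positivity
      rw [abs_le]
      constructor
      · have h : ((‖z‖ ^ 2 - c * s) - (-(r * ‖z‖ ^ 2))) * (A + B)
            = 2 * (B * ‖z‖ ^ 2 - s) := by
          rw [hrdef, hcdef]; field_simp; ring
        nlinarith [hf2, hABpos]
      · have h : (r * ‖z‖ ^ 2 - (‖z‖ ^ 2 - c * s)) * (A + B)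
            = 2 * (s - A * ‖z‖ ^ 2) := by
          rw [hrdef, hcdef]; field_simp; ring
        nlinarith [hf1, hABpos]
    have hcontr : ∀ y : H, ‖y - (c : ℂ) • S y‖ ≤ r * ‖y‖ := by
      intro y
      rw [← hMapp]
      exact aux_contraction M r hMsym hMq y
    have hcoe : ((2 / (A + B) : ℂ)) = ((c : ℝ) : ℂ) := by
      rw [hcdef]; push_cast; ring
    have hbound : ∀ n, ‖x - seq n‖ ≤ r ^ n * ‖x‖ := by
      intro n
      induction n with
      | zero => simp [h0]
      | succ n ih =>
        have heq : x - seq (n + 1) = (x - seq n) - (c : ℂ) • S (x - seq n) := by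
          rw [hrec n, hcoe]; abel
        rw [heq]
        calc ‖(x - seq n) - (c : ℂ) • S (x - seq n)‖ ≤ r * ‖x - seq n‖ := hcontr _
          _ ≤ r * (r ^ n * ‖x‖) := by
              exact mul_le_mul_of_nonneg_left ih hr0
          _ = r ^ (n + 1) * ‖x‖ := by ring
    refine ⟨hbound, ?_⟩
    rw [tendsto_iff_norm_sub_tendsto_zero]
    have htend : Tendsto (fun n => r ^ n * ‖x‖) atTop (nhds 0) := by
      have := tendsto_pow_atTop_nhds_zero_of_lt_one hr0 hr1
      simpa using this.mul_const ‖x‖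
    refine squeeze_zero (fun n => norm_nonneg _) (fun n => ?_) htend
    rw [norm_sub_rev]
    exact hbound n
  · -- degenerate case: A > B forces H trivial
    have hzero : ∀ y : H, y = 0 := by
      intro y
      have h1 := (hframe y).1
      have h2 := (hframe y).2
      push_neg at hAB
      have h3 : ‖y‖ ^ 2 ≤ 0 := by nlinarith
      have h4 : ‖y‖ ^ 2 = 0 := le_antisymm h3 (sq_nonneg _)
      have h5 : ‖y‖ = 0 := by
        have := pow_eq_zero_iff (n := 2) (by norm_num) |>.mp h4
        exact this
      exact norm_eq_zero.mp h5
    have hx0 : x = 0 := hzero x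
    constructor
    · intro n
      rw [hzero (x - seq n), hx0]
      simp
    · rw [hx0]
      have : seq = fun _ => (0 : H) := funext fun n => hzero (seq n)
      rw [this]
      exact tendsto_const_nhds
end

section
/- Let (Ω, Σ, M) be a POVM on a separable Hilbert space H, and let {x_j}_{j≥1} be a countable dense subset of the unit ball of H. Define μ(E) = Σ_j 2^{-j} ⟨M(E)x_j, x_j⟩. Then μ is a finite (hence σ-finite) measure on Σ, and every complex measure μ_{x,y}(E) = ⟨M(E)x, y⟩ (x, y ∈ H) is absolutely continuous with respect to μ. -/
/-!
The quadratic forms `E ↦ ⟪M(E) x, x⟫` are finite positive measures, and `μ` is their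
weighted sum over the dense sequence, which is finite because `⟪M(E) x, x⟫ ≤ ‖M(Ω)‖ ‖x‖²`.
If `μ E = 0`, the quadratic form of the positive operator `M(E)` vanishes on the dense
sequence, hence by continuity on the unit ball, by homogeneity everywhere, and a
self-adjoint operator with vanishing quadratic form is zero.
-/

open MeasureTheory
open scoped InnerProductSpace ENNReal

/-- A positive operator-valued measure (POVM). -/
structure POVM (Ω : Type*) [MeasurableSpace Ω] (H : Type*)
    [NormedAddCommGroup H] [InnerProductSpace ℂ H] [CompleteSpace H] where
  toFun : Set Ω → H →L[ℂ] H
  isPositive : ∀ E : Set Ω, MeasurableSet E → (toFun E).IsPositive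
  empty : toFun ∅ = 0
  weakly_additive : ∀ E : ℕ → Set Ω, (∀ i, MeasurableSet (E i)) →
    Pairwise (Function.onFun Disjoint E) → ∀ x y : H,
      HasSum (fun i => ⟪toFun (E i) x, y⟫_ℂ) ⟪toFun (⋃ i, E i) x, y⟫_ℂ

namespace ContinuousLinearMap

variable {𝕜 E : Type*} [RCLike 𝕜] [NormedAddCommGroup E] [InnerProductSpace 𝕜 E]

lemma reApplyInnerSelf_eq_zero_of_forall_norm_le_one (T : E →L[𝕜] E)
    (h : ∀ x : E, ‖x‖ ≤ 1 → T.reApplyInnerSelf x = 0) (x : E) : T.reApplyInnerSelf x = 0 := by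
  rcases eq_or_ne x 0 with rfl | hx
  · simp [reApplyInnerSelf_apply]
  have hunit := h _ (norm_smul_inv_norm (𝕜 := 𝕜) hx).le
  rw [reApplyInnerSelf_smul] at hunit
  exact (mul_eq_zero.mp hunit).resolve_left (by simpa using hx)

lemma eq_zero_of_reApplyInnerSelf_eq_zero_of_closedBall_subset_closure [CompleteSpace E]
    {T : E →L[𝕜] E} (hT : IsSelfAdjoint T) {s : Set E}
    (hs : ∀ z : E, ‖z‖ ≤ 1 → z ∈ closure s) (h : ∀ x ∈ s, T.reApplyInnerSelf x = 0) :
    T = 0 := by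
  have hclosure : closure s ⊆ {x | T.reApplyInnerSelf x = 0} :=
    closure_minimal h (isClosed_eq T.reApplyInnerSelf_continuous continuous_const)
  have hform (x : E) : ⟪T x, x⟫_𝕜 = 0 := by
    rw [← hT.isSymmetric.coe_reApplyInnerSelf_apply,
      reApplyInnerSelf_eq_zero_of_forall_norm_le_one T (fun z hz => hclosure (hs z hz)) x,
      RCLike.ofReal_zero]
  exact coe_injective (hT.isSymmetric.inner_map_self_eq_zero.mp hform)

end ContinuousLinearMap

lemma MeasureTheory.Measure.isFiniteMeasure_sum_smul {α ι : Type*} [MeasurableSpace α]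
    (c : ι → ℝ≥0∞) (ν : ι → Measure α) {C : ℝ≥0∞} (hC : C ≠ ∞)
    (hν : ∀ i, ν i Set.univ ≤ C) (hc : ∑' i, c i ≠ ∞) :
    IsFiniteMeasure (Measure.sum fun i => c i • ν i) where
  measure_univ_lt_top := by
    rw [Measure.sum_apply _ MeasurableSet.univ]
    calc ∑' i, (c i • ν i) Set.univ
        ≤ ∑' i, c i * C := ENNReal.tsum_le_tsum fun i => mul_le_mul_right (hν i) _
      _ = (∑' i, c i) * C := ENNReal.tsum_mul_right
      _ < ∞ := ENNReal.mul_lt_top hc.lt_top hC.lt_top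

namespace POVM

variable {Ω : Type*} [MeasurableSpace Ω]
  {H : Type*} [NormedAddCommGroup H] [InnerProductSpace ℂ H] [CompleteSpace H]
  (M : POVM Ω H)

lemma re_inner_nonneg {E : Set Ω} (hE : MeasurableSet E) (x : H) :
    0 ≤ (⟪M.toFun E x, x⟫_ℂ).re :=
  (M.isPositive E hE).re_inner_nonneg_left x

lemma hasSum_re_inner (E : ℕ → Set Ω) (hE : ∀ i, MeasurableSet (E i))
    (hdisj : Pairwise (Function.onFun Disjoint E)) (x : H) :
    HasSum (fun i => (⟪M.toFun (E i) x, x⟫_ℂ).re) (⟪M.toFun (⋃ i, E i) x, x⟫_ℂ).re :=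
  (M.weakly_additive E hE hdisj x x).mapL Complex.reCLM

noncomputable def quadMeasure (x : H) : Measure Ω :=
  Measure.ofMeasurable (fun E _ => ENNReal.ofReal (⟪M.toFun E x, x⟫_ℂ).re)
    (by simp [M.empty])
    (fun E hE hdisj => by
      rw [← (M.hasSum_re_inner E hE hdisj x).tsum_eq, ENNReal.ofReal_tsum_of_nonneg
        (fun i => M.re_inner_nonneg (hE i) x) (M.hasSum_re_inner E hE hdisj x).summable])

lemma quadMeasure_apply (x : H) {E : Set Ω} (hE : MeasurableSet E) :
    M.quadMeasure x E = ENNReal.ofReal (⟪M.toFun E x, x⟫_ℂ).re :=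
  Measure.ofMeasurable_apply E hE

lemma quadMeasure_univ_le (x : H) :
    M.quadMeasure x Set.univ ≤ ENNReal.ofReal (‖M.toFun Set.univ‖ * ‖x‖ ^ 2) := by
  rw [M.quadMeasure_apply x MeasurableSet.univ]
  refine ENNReal.ofReal_le_ofReal ?_
  calc (⟪M.toFun Set.univ x, x⟫_ℂ).re
      ≤ ‖M.toFun Set.univ x‖ * ‖x‖ := re_inner_le_norm (𝕜 := ℂ) _ _
    _ ≤ ‖M.toFun Set.univ‖ * ‖x‖ * ‖x‖ := by gcongr; exact (M.toFun Set.univ).le_opNorm x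
    _ = ‖M.toFun Set.univ‖ * ‖x‖ ^ 2 := by ring

lemma toFun_eq_zero_of_quadMeasure_eq_zero {E : Set Ω} (hE : MeasurableSet E) {s : Set H}
    (hs : ∀ z : H, ‖z‖ ≤ 1 → z ∈ closure s) (h : ∀ x ∈ s, M.quadMeasure x E = 0) :
    M.toFun E = 0 := by
  refine ContinuousLinearMap.eq_zero_of_reApplyInnerSelf_eq_zero_of_closedBall_subset_closure
    (M.isPositive E hE).isSelfAdjoint hs fun x hx => ?_
  have hx := h x hx
  rw [M.quadMeasure_apply x hE, ENNReal.ofReal_eq_zero] at hx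
  exact le_antisymm hx (M.re_inner_nonneg hE x)

end POVM

theorem povm_dominating_measure_general
    {Ω : Type*} [MeasurableSpace Ω]
    {H : Type*} [NormedAddCommGroup H] [InnerProductSpace ℂ H] [CompleteSpace H]
    (M : POVM Ω H)
    (xs : ℕ → H) (hball : ∀ j, ‖xs j‖ ≤ 1)
    (hdense : ∀ z : H, ‖z‖ ≤ 1 → z ∈ closure (Set.range xs)) :
    ∃ μ : Measure Ω,
      (∀ E : Set Ω, MeasurableSet E →
        μ E = ∑' j : ℕ, ENNReal.ofReal
          ((2 : ℝ)⁻¹ ^ (j + 1) * (⟪M.toFun E (xs j), xs j⟫_ℂ).re)) ∧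
      IsFiniteMeasure μ ∧
      ∀ (x y : H) (E : Set Ω), MeasurableSet E → μ E = 0 → ⟪M.toFun E x, y⟫_ℂ = 0 := by
  refine ⟨Measure.sum fun j => (2⁻¹ : ℝ≥0∞) ^ (j + 1) • M.quadMeasure (xs j), ?_, ?_, ?_⟩
  · intro E hE
    simp only [Measure.sum_apply _ hE, Measure.smul_apply, smul_eq_mul,
      M.quadMeasure_apply _ hE, ENNReal.ofReal_mul (by positivity : (0 : ℝ) ≤ 2⁻¹ ^ _),
      ENNReal.ofReal_pow (by norm_num : (0 : ℝ) ≤ 2⁻¹), ENNReal.ofReal_inv_of_pos two_pos,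
      ENNReal.ofReal_ofNat]
  · refine Measure.isFiniteMeasure_sum_smul _ _ (ENNReal.ofReal_ne_top (r := ‖M.toFun Set.univ‖))
      (fun j => (M.quadMeasure_univ_le (xs j)).trans (ENNReal.ofReal_le_ofReal ?_)) ?_
    · exact mul_le_of_le_one_right (norm_nonneg _) (pow_le_one₀ (norm_nonneg _) (hball j))
    · simp [ENNReal.tsum_geometric_add_one, ENNReal.one_sub_inv_two]
  · intro x y E hE hμE
    rw [Measure.sum_apply_eq_zero' hE] at hμE
    have hzero : M.toFun E = 0 := M.toFun_eq_zero_of_quadMeasure_eq_zero hE hdense <| by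
      rintro _ ⟨j, rfl⟩
      simpa using hμE j
    simp [hzero]

/-- If `{x_j}` is a countable dense subset of the unit ball of a separable Hilbert space,
then `μ(E) = ∑_j 2^{-(j+1)} ⟪M(E) x_j, x_j⟫` defines a finite measure on `Σ`, and every
complex measure `μ_{x,y}(E) = ⟪M(E)x, y⟫` is absolutely continuous with respect to `μ`. -/
theorem povm_dominating_measure
    {Ω : Type*} [MeasurableSpace Ω]
    {H : Type*} [NormedAddCommGroup H] [InnerProductSpace ℂ H] [CompleteSpace H]
    [TopologicalSpace.SeparableSpace H]
    (M : POVM Ω H)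
    (xs : ℕ → H) (hball : ∀ j, ‖xs j‖ ≤ 1)
    (hdense : ∀ z : H, ‖z‖ ≤ 1 → z ∈ closure (Set.range xs)) :
    ∃ μ : Measure Ω,
      (∀ E : Set Ω, MeasurableSet E →
        μ E = ∑' j : ℕ, ENNReal.ofReal
          ((2 : ℝ)⁻¹ ^ (j + 1) * (⟪M.toFun E (xs j), xs j⟫_ℂ).re)) ∧
      IsFiniteMeasure μ ∧
      ∀ (x y : H) (E : Set Ω), MeasurableSet E → μ E = 0 → ⟪M.toFun E x, y⟫_ℂ = 0 :=
  povm_dominating_measure_general M xs hball hdense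
end

section
/- If (Ω, Σ, M) is a POVM whose total variation with respect to the operator norm is σ-finite, then for every x ∈ H the vector measure E ↦ M(E)x has σ-finite total variation, and in the Radon–Nikodym decomposition M(E) = ∫_E Q(t) dμ(t) with μ the operator-norm total variation measure of M, the operators Q(t) are bounded with ‖Q(t)‖ ≤ 1 for μ-a.e. t. -/
open MeasureTheory
open scoped InnerProductSpace ENNReal

/-- The total variation of a vector-valued set function. -/
noncomputable def totalVar {Ω : Type*} [MeasurableSpace Ω] {X : Type*}
    [SeminormedAddCommGroup X] (ν : Set Ω → X) (E : Set Ω) : ℝ≥0∞ :=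
  ⨆ F : {F : ℕ → Set Ω // (∀ i, MeasurableSet (F i)) ∧
      Pairwise (Function.onFun Disjoint F) ∧ (⋃ i, F i) = E},
    ∑' i, (‖ν (F.1 i)‖₊ : ℝ≥0∞)

/-!
Write `f t = ⟪Q t u, v⟫`. Where `f` is integrable on a set `T` of finite measure, the bound
`‖M T‖ ≤ μ T` forces `re f ≤ ‖u‖ ‖v‖` a.e. on `T`. Where `f` is integrable on no subset of
positive measure, every set integral of `f` is the junk value `0`, so `⟪M T u, v⟫ = 0`; since
`⟪Q t ·, ·⟫` is sesquilinear, polarization spreads this locally to `⟪M T x, y⟫ = 0` for all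
`x, y`, so `M` vanishes there and the set is `μ`-null. An exhaustion argument turns these local
facts into `re ⟪Q t u, v⟫ ≤ ‖u‖ ‖v‖` a.e.; running `(u, v)` through a countable dense subset of
`H × H` and using that `Q t` is bounded (closed graph theorem) gives `‖Q t‖ ≤ 1` a.e.
The first claim is `|M(·) x|(E) ≤ ‖x‖ |M|(E)`.
-/

theorem Set.union_eq_iUnion_nat {α : Type*} (a b : Set α) :
    a ∪ b = ⋃ n : ℕ, if n = 0 then a else b :=
  (Set.union_subset (Set.subset_iUnion_of_subset 0 (by simp))
    (Set.subset_iUnion_of_subset 1 (by simp))).antisymm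
    (Set.iUnion_subset fun n => by split_ifs <;> simp)

namespace MeasureTheory

section NowhereIntegrable

variable {α E : Type*} [MeasurableSpace α] [NormedAddCommGroup E] {μ : Measure α}
  {f : α → E} {s t : Set α}

def NowhereIntegrableOn (f : α → E) (s : Set α) (μ : Measure α) : Prop :=
  ∀ t ⊆ s, MeasurableSet t → IntegrableOn f t μ → μ t = 0

theorem NowhereIntegrableOn.mono (hf : NowhereIntegrableOn f s μ) (hts : t ⊆ s) :
    NowhereIntegrableOn f t μ :=
  fun r hrt => hf r (hrt.trans hts)

theorem NowhereIntegrableOn.setIntegral_eq_zero [NormedSpace ℝ E]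
    (hf : NowhereIntegrableOn f s μ) (hs : MeasurableSet s) : ∫ x in s, f x ∂μ = 0 := by
  by_cases hint : IntegrableOn f s μ
  · rw [Measure.restrict_eq_zero.mpr (hf s subset_rfl hs hint), integral_zero_measure]
  · exact integral_undef hint

theorem exists_subset_integrableOn_or_nowhereIntegrableOn (f : α → E) (hs : MeasurableSet s)
    (hμs : μ s ≠ 0) : ∃ t ⊆ s, MeasurableSet t ∧ μ t ≠ 0 ∧
      (IntegrableOn f t μ ∨ NowhereIntegrableOn f t μ) := by
  by_cases hf : NowhereIntegrableOn f s μ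
  · exact ⟨s, subset_rfl, hs, hμs, Or.inr hf⟩
  · simp only [NowhereIntegrableOn, not_forall] at hf
    obtain ⟨t, hts, ht, hint, hμt⟩ := hf
    exact ⟨t, hts, ht, hμt, Or.inl hint⟩

/-- If `f + g` is integrable on `t`, then `f + 2 • g` is nowhere integrable there, since
otherwise `f = 2 • (f + g) - (f + 2 • g)` would be integrable. -/
theorem NowhereIntegrableOn.exists_add_smul [NormedSpace ℝ E] (hf : NowhereIntegrableOn f s μ)
    (g : α → E) (hs : MeasurableSet s) (hμs : μ s ≠ 0) :
    ∃ t ⊆ s, MeasurableSet t ∧ μ t ≠ 0 ∧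
      ∃ c : ℝ, c ≠ 0 ∧ NowhereIntegrableOn (f + c • g) t μ := by
  obtain ⟨t, hts, ht, hμt, hint | hnowhere⟩ :=
    exists_subset_integrableOn_or_nowhereIntegrableOn (f + g) hs hμs
  · refine ⟨t, hts, ht, hμt, 2, two_ne_zero, fun r hrt hr hint₂ => hf r (hrt.trans hts) hr ?_⟩
    have hf_eq : f = (2 : ℝ) • (f + g) - (f + (2 : ℝ) • g) := by
      ext x
      simp only [Pi.add_apply, Pi.smul_apply, Pi.sub_apply]
      module
    rw [hf_eq]
    exact ((hint.mono_set hrt).smul (2 : ℝ)).sub hint₂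
  · exact ⟨t, hts, ht, hμt, 1, one_ne_zero, by simpa using hnowhere⟩

end NowhereIntegrable

variable {α : Type*} [MeasurableSpace α] {μ : Measure α} {s : Set α}

/-- Exhaustion: the supremum of `μ t` over the subsets `t ⊆ s` with `P t` is attained by a
countable union `u`, and a subset of `s \ u` of positive measure with `P` would exceed it. -/
theorem of_forall_exists_subset {P : Set α → Prop} (hs : MeasurableSet s) (hμs : μ s ≠ ⊤)
    (hP_null : ∀ t ⊆ s, MeasurableSet t → μ t = 0 → P t)
    (hP_iUnion : ∀ t : ℕ → Set α, (∀ n, MeasurableSet (t n)) → (∀ n, P (t n)) →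
      P (⋃ n, t n))
    (hP_local : ∀ t ⊆ s, MeasurableSet t → μ t ≠ 0 →
      ∃ r ⊆ t, MeasurableSet r ∧ μ r ≠ 0 ∧ P r) :
    P s := by
  have hP_union (a b : Set α) (ha : MeasurableSet a) (hb : MeasurableSet b) (hPa : P a)
      (hPb : P b) : P (a ∪ b) := by
    rw [Set.union_eq_iUnion_nat]
    exact hP_iUnion _ (fun n => by split_ifs <;> assumption) (fun n => by split_ifs <;> assumption)
  set 𝒯 := {t | t ⊆ s ∧ MeasurableSet t ∧ P t}
  have h𝒯 : (μ '' 𝒯).Nonempty :=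
    ⟨_, ∅, ⟨Set.empty_subset s, .empty, hP_null ∅ (Set.empty_subset s) .empty measure_empty⟩,
      rfl⟩
  obtain ⟨m, -, hm_lim, hm_mem⟩ := exists_seq_tendsto_sSup h𝒯 (OrderTop.bddAbove _)
  choose t ht hμt using hm_mem
  set u := ⋃ n, t n
  have hu : u ∈ 𝒯 := ⟨Set.iUnion_subset fun n => (ht n).1, .iUnion fun n => (ht n).2.1,
    hP_iUnion t (fun n => (ht n).2.1) fun n => (ht n).2.2⟩
  have hμu : μ u = sSup (μ '' 𝒯) := le_antisymm (le_sSup ⟨u, hu, rfl⟩)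
    (le_of_tendsto' hm_lim fun n => hμt n ▸ measure_mono (Set.subset_iUnion t n))
  have hnull : μ (s \ u) = 0 := by
    by_contra hne
    obtain ⟨r, hr, hrm, hμr, hPr⟩ := hP_local (s \ u) Set.sdiff_subset (hs.diff hu.2.1) hne
    have hur : u ∪ r ∈ 𝒯 := ⟨Set.union_subset hu.1 (hr.trans Set.sdiff_subset),
      hu.2.1.union hrm, hP_union _ _ hu.2.1 hrm hu.2.2 hPr⟩
    have hle : μ u + μ r ≤ μ u + 0 := by
      rw [← measure_union (Set.disjoint_sdiff_right.mono_right hr) hrm, add_zero, hμu]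
      exact le_sSup ⟨_, hur, rfl⟩
    exact hμr (nonpos_iff_eq_zero.mp
      (ENNReal.le_of_add_le_add_left (ne_top_of_le_ne_top hμs (measure_mono hu.1)) hle))
  have h := hP_union u (s \ u) hu.2.1 (hs.diff hu.2.1) hu.2.2
    (hP_null _ Set.sdiff_subset (hs.diff hu.2.1) hnull)
  rwa [Set.union_sdiff_cancel hu.1] at h

end MeasureTheory

section TotalVar

variable {Ω X : Type*} [MeasurableSpace Ω] [SeminormedAddCommGroup X] {E : Set Ω}

theorem tsum_le_totalVar (ν : Set Ω → X) {F : ℕ → Set Ω} (hF : ∀ i, MeasurableSet (F i))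
    (hFd : Pairwise (Function.onFun Disjoint F)) (hFE : ⋃ i, F i = E) :
    ∑' i, (‖ν (F i)‖₊ : ℝ≥0∞) ≤ totalVar ν E :=
  le_iSup (fun G : {F : ℕ → Set Ω // (∀ i, MeasurableSet (F i)) ∧
      Pairwise (Function.onFun Disjoint F) ∧ (⋃ i, F i) = E} => ∑' i, (‖ν (G.1 i)‖₊ : ℝ≥0∞))
    ⟨F, hF, hFd, hFE⟩

theorem nnnorm_le_totalVar (ν : Set Ω → X) (hE : MeasurableSet E) :
    (‖ν E‖₊ : ℝ≥0∞) ≤ totalVar ν E := by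
  have hunion : ⋃ i : ℕ, (if i = 0 then E else ∅) = E := by
    rw [← Set.union_eq_iUnion_nat, Set.union_empty]
  refine le_trans ?_ (tsum_le_totalVar ν (fun i => by split_ifs <;> simp [hE])
    (fun i j hij => ?_) hunion)
  · exact le_of_eq_of_le (by simp) (ENNReal.le_tsum 0)
  · rcases eq_or_ne i 0 with rfl | hi
    · simp [Function.onFun, hij.symm]
    · simp [Function.onFun, hi]

theorem totalVar_eq_zero_of_forall_subset {ν : Set Ω → X}
    (h : ∀ F ⊆ E, MeasurableSet F → ν F = 0) : totalVar ν E = 0 := by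
  refine ENNReal.iSup_eq_zero.mpr fun F => ?_
  simp [h _ (F.2.2.2 ▸ Set.subset_iUnion F.1 _) (F.2.1 _)]

theorem totalVar_apply_le {𝕜 Y : Type*} [NontriviallyNormedField 𝕜] [NormedAddCommGroup Y]
    [NormedSpace 𝕜 Y] {Z : Type*} [NormedAddCommGroup Z] [NormedSpace 𝕜 Z]
    (ν : Set Ω → Y →L[𝕜] Z) (y : Y) (E : Set Ω) :
    totalVar (fun F => ν F y) E ≤ ‖y‖₊ * totalVar ν E := by
  refine iSup_le fun F => ?_
  calc ∑' i, (‖ν (F.1 i) y‖₊ : ℝ≥0∞)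
      ≤ ∑' i, (‖y‖₊ : ℝ≥0∞) * ‖ν (F.1 i)‖₊ := ENNReal.tsum_le_tsum fun i => by
        rw [mul_comm]; exact_mod_cast (ν (F.1 i)).le_opNNNorm y
    _ = ‖y‖₊ * ∑' i, (‖ν (F.1 i)‖₊ : ℝ≥0∞) := ENNReal.tsum_mul_left
    _ ≤ ‖y‖₊ * totalVar ν E := mul_le_mul_right (tsum_le_totalVar ν F.2.1 F.2.2.1 F.2.2.2) _

end TotalVar

theorem ContinuousLinearMap.norm_apply_le_of_re_inner_le {𝕜 E F : Type*} [RCLike 𝕜]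
    [NormedAddCommGroup E] [NormedSpace 𝕜 E] [NormedAddCommGroup F] [InnerProductSpace 𝕜 F]
    (A : E →L[𝕜] F) {D : Set (E × F)} (hD : Dense D)
    (h : ∀ p ∈ D, RCLike.re ⟪A p.1, p.2⟫_𝕜 ≤ ‖p.1‖ * ‖p.2‖) (x : E) : ‖A x‖ ≤ ‖x‖ := by
  have hclosed : IsClosed {p : E × F | RCLike.re ⟪A p.1, p.2⟫_𝕜 ≤ ‖p.1‖ * ‖p.2‖} :=
    isClosed_le (by fun_prop) (by fun_prop)
  have hx := hclosed.closure_subset_iff.mpr h (hD (x, A x))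
  simp only [Set.mem_ofPred_eq, inner_self_eq_norm_sq, sq] at hx
  rcases (norm_nonneg (A x)).eq_or_lt with h0 | hpos
  · exact h0 ▸ norm_nonneg x
  · exact le_of_mul_le_mul_right hx hpos

namespace POVM

variable {Ω : Type*} [MeasurableSpace Ω] {H : Type*} [NormedAddCommGroup H]
  [InnerProductSpace ℂ H] [CompleteSpace H] {M : POVM Ω H} {μ : Measure Ω}
  {Q : Ω → H →ₗ[ℂ] H} {S T : Set Ω}

def IsTotalVariationMeasure (M : POVM Ω H) (μ : Measure Ω) : Prop :=
  ∀ E, MeasurableSet E → μ E = totalVar M.toFun E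

def HasWeakDensity (M : POVM Ω H) (μ : Measure Ω) (Q : Ω → H →ₗ[ℂ] H) : Prop :=
  ∀ E, MeasurableSet E → ∀ x y : H, ⟪M.toFun E x, y⟫_ℂ = ∫ t in E, ⟪Q t x, y⟫_ℂ ∂μ

theorem inner_eq_zero_of_subset_iUnion (M : POVM Ω H) {x y : H} {U : ℕ → Set Ω}
    (hU : ∀ n, MeasurableSet (U n))
    (h : ∀ n, ∀ T ⊆ U n, MeasurableSet T → ⟪M.toFun T x, y⟫_ℂ = 0)
    (hTU : T ⊆ ⋃ n, U n) (hT : MeasurableSet T) : ⟪M.toFun T x, y⟫_ℂ = 0 := by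
  have hsum := M.weakly_additive (fun n => T ∩ disjointed U n)
    (fun n => hT.inter (.disjointed hU n))
    (fun i j hij => (disjoint_disjointed U hij).mono Set.inter_subset_right Set.inter_subset_right)
    x y
  rw [← Set.inter_iUnion, iUnion_disjointed, Set.inter_eq_left.mpr hTU] at hsum
  refine hsum.unique ?_
  convert hasSum_zero with n
  exact h n _ (Set.inter_subset_right.trans (disjointed_subset U n))
    (hT.inter (.disjointed hU n))

theorem IsTotalVariationMeasure.nnnorm_le (hμ : M.IsTotalVariationMeasure μ)
    (hT : MeasurableSet T) : (‖M.toFun T‖₊ : ℝ≥0∞) ≤ μ T :=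
  hμ T hT ▸ nnnorm_le_totalVar M.toFun hT

theorem IsTotalVariationMeasure.norm_le (hμ : M.IsTotalVariationMeasure μ)
    (hT : MeasurableSet T) (hμT : μ T ≠ ⊤) : ‖M.toFun T‖ ≤ μ.real T := by
  simpa [measureReal_def] using ENNReal.toReal_mono hμT (hμ.nnnorm_le hT)

theorem IsTotalVariationMeasure.eq_zero_of_measure_eq_zero (hμ : M.IsTotalVariationMeasure μ)
    (hT : MeasurableSet T) (hμT : μ T = 0) : M.toFun T = 0 := by
  simpa [hμT] using hμ.nnnorm_le hT

theorem IsTotalVariationMeasure.measure_eq_zero_of_forall_subset (hμ : M.IsTotalVariationMeasure μ)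
    (hS : MeasurableSet S) (h : ∀ T ⊆ S, MeasurableSet T → M.toFun T = 0) : μ S = 0 :=
  (hμ S hS).trans (totalVar_eq_zero_of_forall_subset h)

namespace HasWeakDensity

theorem inner_eq_zero_of_nowhereIntegrableOn (hQ : M.HasWeakDensity μ Q) {x y : H}
    (hxy : NowhereIntegrableOn (fun t => ⟪Q t x, y⟫_ℂ) S μ) (hTS : T ⊆ S)
    (hT : MeasurableSet T) : ⟪M.toFun T x, y⟫_ℂ = 0 := by
  rw [hQ T hT]
  exact (hxy.mono hTS).setIntegral_eq_zero hT

/-- Polarization: successively shrinking `S`, the pairs `(u + α x, v)`, `(u, v + β y)` and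
`(u + α x, v + γ y)` become nowhere integrable too, and the four vanishing pairings of `M`
combine to `α γ ⟪M T x, y⟫ = 0`. -/
theorem exists_subset_inner_eq_zero (hQ : M.HasWeakDensity μ Q) {u v : H}
    (huv : NowhereIntegrableOn (fun t => ⟪Q t u, v⟫_ℂ) S μ) (hS : MeasurableSet S)
    (hμS : μ S ≠ 0) (x y : H) : ∃ R ⊆ S, MeasurableSet R ∧ μ R ≠ 0 ∧
      ∀ T ⊆ R, MeasurableSet T → ⟪M.toFun T x, y⟫_ℂ = 0 := by
  have hslot₁ (a b : H) (c : ℝ) : ((fun t => ⟪Q t a, b⟫_ℂ) + c • fun t => ⟪Q t x, b⟫_ℂ) =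
      fun t => ⟪Q t (a + (c : ℂ) • x), b⟫_ℂ := by
    ext t
    simp [Complex.real_smul]
  have hslot₂ (a b : H) (c : ℝ) : ((fun t => ⟪Q t a, b⟫_ℂ) + c • fun t => ⟪Q t a, y⟫_ℂ) =
      fun t => ⟪Q t a, b + (c : ℂ) • y⟫_ℂ := by
    ext t
    simp [Complex.real_smul]
  obtain ⟨R₁, hR₁S, hR₁, hμR₁, α, hα, h₁⟩ := huv.exists_add_smul _ hS hμS
  rw [hslot₁] at h₁
  obtain ⟨R₂, hR₂R₁, hR₂, hμR₂, β, hβ, h₂⟩ := (huv.mono hR₁S).exists_add_smul _ hR₁ hμR₁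
  rw [hslot₂] at h₂
  obtain ⟨R₃, hR₃R₂, hR₃, hμR₃, γ, hγ, h₃⟩ := (h₁.mono hR₂R₁).exists_add_smul _ hR₂ hμR₂
  rw [hslot₂] at h₃
  refine ⟨R₃, hR₃R₂.trans (hR₂R₁.trans hR₁S), hR₃, hμR₃, fun T hTR hT => ?_⟩
  have hTR₂ := hTR.trans hR₃R₂
  have hTR₁ := hTR₂.trans hR₂R₁
  have e₀ := hQ.inner_eq_zero_of_nowhereIntegrableOn huv (hTR₁.trans hR₁S) hT
  have e₁ := hQ.inner_eq_zero_of_nowhereIntegrableOn h₁ hTR₁ hT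
  have e₂ := hQ.inner_eq_zero_of_nowhereIntegrableOn h₂ hTR₂ hT
  have e₃ := hQ.inner_eq_zero_of_nowhereIntegrableOn h₃ hTR hT
  simp only [map_add, map_smul, inner_add_left, inner_add_right, inner_smul_left,
    inner_smul_right, Complex.conj_ofReal] at e₁ e₂ e₃
  have hu_y : ⟪M.toFun T u, y⟫_ℂ = 0 := by simpa [e₀, hβ] using e₂
  have key : (α : ℂ) * γ * ⟪M.toFun T x, y⟫_ℂ = 0 := by linear_combination e₃ - e₁ - γ * hu_y
  simpa [hα, hγ] using key

theorem measure_eq_zero_of_nowhereIntegrableOn (hQ : M.HasWeakDensity μ Q)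
    (hμ : M.IsTotalVariationMeasure μ) {u v : H}
    (huv : NowhereIntegrableOn (fun t => ⟪Q t u, v⟫_ℂ) S μ) (hS : MeasurableSet S)
    (hμS : μ S ≠ ⊤) : μ S = 0 := by
  have hzero (x y : H) : ∀ T ⊆ S, MeasurableSet T → ⟪M.toFun T x, y⟫_ℂ = 0 := by
    refine of_forall_exists_subset
      (P := fun R => ∀ T ⊆ R, MeasurableSet T → ⟪M.toFun T x, y⟫_ℂ = 0) hS hμS ?_ ?_ ?_
    · intro R _ _ hμR T hTR hT
      simp [hμ.eq_zero_of_measure_eq_zero hT (measure_mono_null hTR hμR)]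
    · exact fun U hU hPU T hTU hT => M.inner_eq_zero_of_subset_iUnion hU hPU hTU hT
    · exact fun R hRS hR hμR => hQ.exists_subset_inner_eq_zero (huv.mono hRS) hR hμR x y
  refine hμ.measure_eq_zero_of_forall_subset hS fun T hTS hT => ?_
  ext x
  exact ext_inner_right ℂ fun y => by simpa using hzero x y T hTS hT

theorem ae_restrict_re_inner_le_of_integrableOn (hQ : M.HasWeakDensity μ Q)
    (hμ : M.IsTotalVariationMeasure μ) {u v : H}
    (huv : IntegrableOn (fun t => ⟪Q t u, v⟫_ℂ) S μ) (hS : MeasurableSet S) (hμS : μ S ≠ ⊤) :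
    ∀ᵐ t ∂μ.restrict S, RCLike.re ⟪Q t u, v⟫_ℂ ≤ ‖u‖ * ‖v‖ := by
  have : IsFiniteMeasure (μ.restrict S) := isFiniteMeasure_restrict.mpr hμS
  refine ae_le_of_forall_setIntegral_le huv.re (integrable_const _) fun T hT _ => ?_
  have hTS : μ (T ∩ S) ≠ ⊤ := ne_top_of_le_ne_top hμS (measure_mono Set.inter_subset_right)
  rw [setIntegral_const, Measure.restrict_restrict hT,
    integral_re (huv.mono_set Set.inter_subset_right), ← hQ _ (hT.inter hS),
    measureReal_restrict_apply hT, smul_eq_mul]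
  calc RCLike.re ⟪M.toFun (T ∩ S) u, v⟫_ℂ ≤ ‖M.toFun (T ∩ S) u‖ * ‖v‖ :=
        (RCLike.re_le_norm _).trans (norm_inner_le_norm _ _)
    _ ≤ ‖M.toFun (T ∩ S)‖ * ‖u‖ * ‖v‖ := by gcongr; exact (M.toFun _).le_opNorm u
    _ ≤ μ.real (T ∩ S) * ‖u‖ * ‖v‖ := by gcongr; exact hμ.norm_le (hT.inter hS) hTS
    _ = μ.real (T ∩ S) * (‖u‖ * ‖v‖) := mul_assoc _ _ _

theorem ae_restrict_re_inner_le (hQ : M.HasWeakDensity μ Q) (hμ : M.IsTotalVariationMeasure μ)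
    (hS : MeasurableSet S) (hμS : μ S ≠ ⊤) (u v : H) :
    ∀ᵐ t ∂μ.restrict S, RCLike.re ⟪Q t u, v⟫_ℂ ≤ ‖u‖ * ‖v‖ := by
  refine of_forall_exists_subset
    (P := fun R => ∀ᵐ t ∂μ.restrict R, RCLike.re ⟪Q t u, v⟫_ℂ ≤ ‖u‖ * ‖v‖) hS hμS ?_ ?_ ?_
  · intro R _ _ hμR
    simp [Measure.restrict_eq_zero.mpr hμR]
  · exact fun U _ hU => ae_restrict_iUnion_iff U _ |>.mpr hU
  · intro R hRS hR hμR
    obtain ⟨T, hTR, hT, hμT, hint | hnowhere⟩ :=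
      exists_subset_integrableOn_or_nowhereIntegrableOn (fun t => ⟪Q t u, v⟫_ℂ) hR hμR
    all_goals have hμT_fin : μ T ≠ ⊤ := ne_top_of_le_ne_top hμS (measure_mono (hTR.trans hRS))
    · exact ⟨T, hTR, hT, hμT, hQ.ae_restrict_re_inner_le_of_integrableOn hμ hint hT hμT_fin⟩
    · exact absurd (hQ.measure_eq_zero_of_nowhereIntegrableOn hμ hnowhere hT hμT_fin) hμT

end HasWeakDensity

end POVM

/-- If the operator-norm total variation of a POVM `M` is σ-finite, then for every
`x ∈ H` the vector measure `E ↦ M(E)x` has σ-finite total variation, and in any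
Radon–Nikodym decomposition of `M` (by closed operators `Q(t)` defined on all of `H`)
with respect to the operator-norm total-variation measure `μ` of `M`, the operators
`Q(t)` are bounded with `‖Q(t)‖ ≤ 1` for `μ`-a.e. `t`. -/
theorem povm_sigma_finite_corollary
    {Ω : Type*} [MeasurableSpace Ω]
    {H : Type*} [NormedAddCommGroup H] [InnerProductSpace ℂ H] [CompleteSpace H]
    [TopologicalSpace.SeparableSpace H]
    (M : POVM Ω H)
    (hσfin : ∃ c : ℕ → Set Ω, (∀ n, MeasurableSet (c n)) ∧ (⋃ n, c n) = Set.univ ∧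
      ∀ n, totalVar M.toFun (c n) < ⊤)
    (μ : Measure Ω) (hμ : ∀ E : Set Ω, MeasurableSet E → μ E = totalVar M.toFun E)
    (Q : Ω → (H →ₗ[ℂ] H))
    (hQclosed : ∀ t, IsClosed {p : H × H | p.2 = Q t p.1})
    (hQ : ∀ E : Set Ω, MeasurableSet E → ∀ x y : H,
      ⟪M.toFun E x, y⟫_ℂ = ∫ t in E, ⟪Q t x, y⟫_ℂ ∂μ) :
    (∀ x : H, ∃ c : ℕ → Set Ω, (∀ n, MeasurableSet (c n)) ∧ (⋃ n, c n) = Set.univ ∧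
      ∀ n, totalVar (fun E => M.toFun E x) (c n) < ⊤) ∧
    ∀ᵐ t ∂μ, ∀ x : H, ‖Q t x‖ ≤ ‖x‖ := by
  obtain ⟨c, hc, hc_univ, hc_fin⟩ := hσfin
  refine ⟨fun x => ⟨c, hc, hc_univ, fun n => (totalVar_apply_le M.toFun x (c n)).trans_lt
    (ENNReal.mul_lt_top ENNReal.coe_lt_top (hc_fin n))⟩, ?_⟩
  have hbound (p : H × H) : ∀ᵐ t ∂μ, RCLike.re ⟪Q t p.1, p.2⟫_ℂ ≤ ‖p.1‖ * ‖p.2‖ := by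
    have h := (ae_restrict_iUnion_iff c _).mpr fun n =>
      POVM.HasWeakDensity.ae_restrict_re_inner_le hQ hμ (hc n)
        ((hμ _ (hc n)).trans_lt (hc_fin n)).ne p.1 p.2
    rwa [hc_univ, Measure.restrict_univ] at h
  obtain ⟨D, hD_countable, hD_dense⟩ := TopologicalSpace.exists_countable_dense H
  filter_upwards [(ae_ball_iff (hD_countable.prod hD_countable)).mpr fun p _ => hbound p]
    with t ht x
  have hgraph : IsClosed ((Q t).graph : Set (H × H)) := by
    convert hQclosed t
    ext p
    exact (Q t).mem_graph_iff p
  exact (ContinuousLinearMap.ofIsClosedGraph hgraph).norm_apply_le_of_re_inner_le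
    (hD_dense.prod hD_dense) ht x
end

section
/- Let H be a separable Hilbert space, Ω a set with σ-algebra Σ, μ a σ-finite measure, and M₀ a countable ℚ+iℚ-linear subspace of H. Suppose q: Ω × M₀ × M₀ → ℂ satisfies: for each fixed y ∈ M₀ and a.e. t, x ↦ q(t; x, y) is ℚ+iℚ-linear and |q(t; x, y)| ≤ g_y(t)‖x‖ for some finite measurable g_y. Then for a.e. t there exist vectors z(t; y) ∈ H with q(t; x, y) = ⟨x, z(t; y)⟩ for all x, y ∈ M₀. -/
/-!
For fixed `t` and `y`, the map `x ↦ q(t; x, y)` is additive and bounded on `M₀`, hence Lipschitz,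
so it extends uniquely to a continuous map on the closure of `M₀`. Since `ℚ + iℚ` is dense in `ℂ`,
that closure is a closed `ℂ`-subspace and the extension is `ℂ`-linear, so the Riesz representation
theorem in the closure gives `z(t; y)`. Countability of `M₀` turns "for each `y`, for a.e. `t`"
into "for a.e. `t`, for each `y`".
-/

open MeasureTheory
open scoped InnerProductSpace

def ratComplex : Set ℂ := {c : ℂ | ∃ a b : ℚ, c = (a : ℂ) + (b : ℂ) * Complex.I}

theorem ratComplex_eq_range :
    ratComplex = Set.range (Complex.equivRealProdCLM.symm ∘
      Prod.map ((↑) : ℚ → ℝ) ((↑) : ℚ → ℝ)) := by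
  ext c
  simp [ratComplex, Complex.equivRealProdCLM_symm_apply, eq_comm]

theorem dense_ratComplex : Dense ratComplex := by
  rw [ratComplex_eq_range]
  exact Complex.equivRealProdCLM.symm.surjective.denseRange.comp
    (Rat.denseRange_cast.prodMap Rat.denseRange_cast) (map_continuous _)

theorem neg_one_mem_ratComplex : (-1 : ℂ) ∈ ratComplex := ⟨-1, 0, by simp⟩

theorem zero_mem_ratComplex : (0 : ℂ) ∈ ratComplex := ⟨0, 0, by simp⟩

section RatComplexLinear

variable {E F : Type*} [AddCommGroup E] [Module ℂ E] [AddCommGroup F] [Module ℂ F]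

structure IsRatComplexSubspace (S : Set E) : Prop where
  add_mem : ∀ x ∈ S, ∀ x' ∈ S, x + x' ∈ S
  smul_mem : ∀ c ∈ ratComplex, ∀ x ∈ S, c • x ∈ S

structure IsRatComplexLinearOn (f : E → F) (S : Set E) : Prop where
  map_add : ∀ x ∈ S, ∀ x' ∈ S, f (x + x') = f x + f x'
  map_smul : ∀ c ∈ ratComplex, ∀ x ∈ S, f (c • x) = c • f x

variable {S : Set E}

theorem IsRatComplexSubspace.zero_mem (hS : IsRatComplexSubspace S) (hne : S.Nonempty) :
    (0 : E) ∈ S := by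
  obtain ⟨x, hx⟩ := hne
  simpa using hS.smul_mem 0 zero_mem_ratComplex x hx

theorem IsRatComplexSubspace.sub_mem (hS : IsRatComplexSubspace S) {x x' : E} (hx : x ∈ S)
    (hx' : x' ∈ S) : x - x' ∈ S := by
  simpa [sub_eq_add_neg] using hS.add_mem x hx _ (hS.smul_mem (-1) neg_one_mem_ratComplex x' hx')

theorem IsRatComplexLinearOn.map_sub {f : E → F} (hf : IsRatComplexLinearOn f S)
    (hS : IsRatComplexSubspace S) {x x' : E} (hx : x ∈ S) (hx' : x' ∈ S) :
    f (x - x') = f x - f x' := by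
  have hneg := hS.smul_mem (-1) neg_one_mem_ratComplex x' hx'
  rw [sub_eq_add_neg, ← neg_one_smul ℂ x', hf.map_add x hx _ hneg,
    hf.map_smul (-1) neg_one_mem_ratComplex x' hx', neg_one_smul, sub_eq_add_neg]

variable [TopologicalSpace E] [ContinuousAdd E] [ContinuousSMul ℂ E]

def IsRatComplexSubspace.topologicalClosure (hS : IsRatComplexSubspace S) (h0 : (0 : E) ∈ S) :
    Submodule ℂ E where
  carrier := closure S
  add_mem' hx hx' := map_mem_closure₂ continuous_add hx hx' hS.add_mem
  zero_mem' := subset_closure h0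
  smul_mem' c _ hx := map_mem_closure₂ continuous_smul (dense_ratComplex c) hx hS.smul_mem

end RatComplexLinear

section Extension

variable {E F : Type*} [NormedAddCommGroup E] [NormedSpace ℂ E]
  [NormedAddCommGroup F] [NormedSpace ℂ F] {S : Set E} {f : E → F}

theorem IsRatComplexLinearOn.lipschitzWith_domRestrict (hf : IsRatComplexLinearOn f S)
    (hS : IsRatComplexSubspace S) {C : ℝ} (hbound : ∀ x ∈ S, ‖f x‖ ≤ C * ‖x‖) :
    LipschitzWith C.toNNReal (S.domRestrict f) := by
  refine lipschitzOnWith_iff_restrict.mp (LipschitzOnWith.of_dist_le' fun x hx x' hx' => ?_)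
  rw [dist_eq_norm, dist_eq_norm, ← hf.map_sub hS hx hx']
  exact hbound _ (hS.sub_mem hx hx')

theorem IsRatComplexLinearOn.exists_continuousLinearMap [CompleteSpace F]
    (hf : IsRatComplexLinearOn f S) (hS : IsRatComplexSubspace S) (h0 : (0 : E) ∈ S) {C : ℝ}
    (hbound : ∀ x ∈ S, ‖f x‖ ≤ C * ‖x‖) :
    ∃ L : hS.topologicalClosure h0 →L[ℂ] F, ∀ x (hx : x ∈ S), L ⟨x, subset_closure hx⟩ = f x := by
  let ι : S → hS.topologicalClosure h0 := fun x => ⟨x, subset_closure x.2⟩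
  have hι : IsUniformInducing ι := Isometry.isUniformInducing (f := ι) fun _ _ => rfl
  have hdense : DenseRange ι := Topology.IsInducing.subtypeVal.dense_iff.2 fun v => by
    rw [← Set.range_comp]
    exact Subtype.range_coe.symm ▸ v.2
  have hlip := hf.lipschitzWith_domRestrict hS hbound
  let L := (hι.isDenseInducing hdense).extend (S.domRestrict f)
  have hL_cont : Continuous L :=
    (uniformContinuous_uniformly_extend hι hdense hlip.uniformContinuous).continuous
  have hL_eq : ∀ x : S, L (ι x) = f x := (hι.isDenseInducing hdense).extend_eq hlip.continuous
  have hL_add : ∀ v w, L (v + w) = L v + L w := by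
    refine hdense.induction_on₂ (isClosed_eq (by fun_prop) (by fun_prop)) fun x x' => ?_
    change L (ι ⟨_, hS.add_mem x x.2 x' x'.2⟩) = _
    rw [hL_eq, hL_eq, hL_eq]
    exact hf.map_add x x.2 x' x'.2
  have hL_smul : ∀ (c : ℂ) v, L (c • v) = c • L v := fun c v => by
    refine (dense_ratComplex.prod hdense).induction (P := fun p => L (p.1 • p.2) = p.1 • L p.2)
      ?_ (isClosed_eq (by fun_prop) (by fun_prop)) (c, v)
    rintro ⟨c, _⟩ ⟨hc, x, rfl⟩
    change L (ι ⟨_, hS.smul_mem c hc x x.2⟩) = _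
    rw [hL_eq, hL_eq]
    exact hf.map_smul c hc x x.2
  exact ⟨⟨⟨⟨L, hL_add⟩, hL_smul⟩, hL_cont⟩, fun x hx => hL_eq ⟨x, hx⟩⟩

end Extension

theorem IsRatComplexLinearOn.exists_inner_eq {H : Type*} [NormedAddCommGroup H]
    [InnerProductSpace ℂ H] [CompleteSpace H] {S : Set H} {f : H → ℂ}
    (hf : IsRatComplexLinearOn f S) (hS : IsRatComplexSubspace S) {C : ℝ}
    (hbound : ∀ x ∈ S, ‖f x‖ ≤ C * ‖x‖) :
    ∃ z : H, ∀ x ∈ S, f x = ⟪z, x⟫_ℂ := by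
  rcases S.eq_empty_or_nonempty with rfl | hne
  · exact ⟨0, fun x hx => absurd hx (Set.notMem_empty x)⟩
  have h0 := hS.zero_mem hne
  obtain ⟨L, hL⟩ := hf.exists_continuousLinearMap hS h0 hbound
  have : CompleteSpace (hS.topologicalClosure h0) := isClosed_closure.completeSpace_coe
  refine ⟨((InnerProductSpace.toDual ℂ (hS.topologicalClosure h0)).symm L : H), fun x hx => ?_⟩
  rw [← hL x hx, ← InnerProductSpace.toDual_symm_apply, Submodule.coe_inner]

-- Mathlib's inner product is conjugate-linear in its first argument: the paper's `⟨x, z⟩` is `⟪z, x⟫`.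
theorem riesz_representation_ae_general
    {Ω : Type*} [MeasurableSpace Ω] (μ : Measure Ω)
    {H : Type*} [NormedAddCommGroup H] [InnerProductSpace ℂ H] [CompleteSpace H]
    (M₀ : Set H) (hcount : M₀.Countable)
    (haddM : ∀ x ∈ M₀, ∀ x' ∈ M₀, x + x' ∈ M₀)
    (hsmulM : ∀ c ∈ ratComplex, ∀ x ∈ M₀, c • x ∈ M₀)
    (q : Ω → H → H → ℂ)
    (hq : ∀ y ∈ M₀, ∃ g : Ω → ℝ, Measurable g ∧
      ∀ᵐ t ∂μ,
        (∀ x ∈ M₀, ∀ x' ∈ M₀, q t (x + x') y = q t x y + q t x' y) ∧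
        (∀ c ∈ ratComplex, ∀ x ∈ M₀, q t (c • x) y = c * q t x y) ∧
        (∀ x ∈ M₀, ‖q t x y‖ ≤ g t * ‖x‖)) :
    ∀ᵐ t ∂μ, ∀ y ∈ M₀, ∃ z : H, ∀ x ∈ M₀, q t x y = ⟪z, x⟫_ℂ := by
  rw [ae_ball_iff hcount]
  intro y hy
  obtain ⟨g, -, hae⟩ := hq y hy
  filter_upwards [hae] with t ⟨hadd, hsmul, hbound⟩
  exact IsRatComplexLinearOn.exists_inner_eq ⟨hadd, hsmul⟩ ⟨haddM, hsmulM⟩ hbound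

/-- If `q(t; ·, y)` is a.e. `ℚ+iℚ`-linear on a countable `ℚ+iℚ`-linear subspace `M₀` of a
separable Hilbert space and satisfies `|q(t; x, y)| ≤ g_y(t) ‖x‖` with `g_y` finite
measurable, then for a.e. `t` there are vectors `z(t; y)` with `q(t; x, y) = ⟨x, z(t; y)⟩`
(linear in `x`; in Mathlib's convention, `q t x y = ⟪z, x⟫`) for all `x, y ∈ M₀`. -/
theorem riesz_representation_ae
    {Ω : Type*} [MeasurableSpace Ω] (μ : Measure Ω)
    {H : Type*} [NormedAddCommGroup H] [InnerProductSpace ℂ H] [CompleteSpace H]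
    [TopologicalSpace.SeparableSpace H]
    (M₀ : Set H) (hcount : M₀.Countable)
    (haddM : ∀ x ∈ M₀, ∀ x' ∈ M₀, x + x' ∈ M₀)
    (hsmulM : ∀ c ∈ ratComplex, ∀ x ∈ M₀, c • x ∈ M₀)
    (q : Ω → H → H → ℂ)
    (hq : ∀ y ∈ M₀, ∃ g : Ω → ℝ, Measurable g ∧
      ∀ᵐ t ∂μ,
        (∀ x ∈ M₀, ∀ x' ∈ M₀, q t (x + x') y = q t x y + q t x' y) ∧
        (∀ c ∈ ratComplex, ∀ x ∈ M₀, q t (c • x) y = c * q t x y) ∧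
        (∀ x ∈ M₀, ‖q t x y‖ ≤ g t * ‖x‖)) :
    ∀ᵐ t ∂μ, ∀ y ∈ M₀, ∃ z : H, ∀ x ∈ M₀, q t x y = ⟪z, x⟫_ℂ :=
  riesz_representation_ae_general μ M₀ hcount haddM hsmulM q hq
end
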